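/- Let E and F be staircases of the same finite cardinality. If S_E(k) ≥ S_F(k) for all k does NOT hold, then there is no system of arrows S on E with S(E) = F. Equivalently: existence of a system of arrows from E to F implies S_E ≥ S_F pointwise; moreover the sets S(E) and E have the same cardinality. -/
import Mathlib


open Set

/-- A staircase: a subset of ℕ² whose complement is closed under addition of ℕ². -/
def IsStaircase (E : Set (ℕ × ℕ)) : Prop :=
  ∀ p : ℕ × ℕ, p ∉ E → ∀ q : ℕ × ℕ, p + q ∉ E

/-- The degree d(x^α y^β) = -b·α + a·β. -/
def dDeg (a b : ℤ) (p : ℕ × ℕ) : ℤ := -b * p.1 + a * p.2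

/-- The monomial order: smaller degree, or equal degree and smaller y-exponent. -/
def mLt (a b : ℤ) (p q : ℕ × ℕ) : Prop :=
  dDeg a b p < dDeg a b q ∨ (dDeg a b p = dDeg a b q ∧ p.2 < q.2)

def mLe (a b : ℤ) (p q : ℕ × ℕ) : Prop := mLt a b p q ∨ p = q

/-- An arrow on a staircase `E`: origin `P ∈ E`, and `Q - P` a nonpositive multiple of `(a,b)`. -/
def IsArrow (a b : ℤ) (E : Set (ℕ × ℕ)) (P Q : ℕ × ℕ) : Prop :=
  P ∈ E ∧ ∃ l : ℤ, l ≤ 0 ∧ (Q.1 : ℤ) - P.1 = l * a ∧ (Q.2 : ℤ) - P.2 = l * b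

/-- `(P,Q)` is shorter than `(P',Q')`: |λ| ≤ |λ'| (equivalently, since a > 0,
comparison of the absolute values of the x-displacements). -/
def Shorter (P Q P' Q' : ℕ × ℕ) : Prop :=
  |(Q.1 : ℤ) - P.1| ≤ |(Q'.1 : ℤ) - P'.1|

/-- A system of arrows on a staircase `E`, encoded by the map `f` sending each origin to
the end of its arrow: each `p ∈ E` carries an arrow `(p, f p)`, ends are pairwise distinct,
and the system is compatible with division. -/
def IsArrowSystem (a b : ℤ) (E : Set (ℕ × ℕ)) (f : ℕ × ℕ → ℕ × ℕ) : Prop :=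
  (∀ p ∈ E, IsArrow a b E p (f p)) ∧
  (∀ p ∈ E, ∀ q ∈ E, p ≠ q → f p ≠ f q) ∧
  (∀ p ∈ E, ∀ Q' : ℕ × ℕ, Q'.1 ≤ (f p).1 → Q'.2 ≤ (f p).2 →
    ∃ g ∈ E, f g = Q' ∧ Shorter g Q' p (f p))

/-- An arrow on the complement `Eᶜ`: origin `P ∉ E`, and `Q - P` a nonnegative multiple
of `(a,b)`. -/
def IsCArrow (a b : ℤ) (E : Set (ℕ × ℕ)) (P Q : ℕ × ℕ) : Prop :=
  P ∉ E ∧ ∃ l : ℤ, 0 ≤ l ∧ (Q.1 : ℤ) - P.1 = l * a ∧ (Q.2 : ℤ) - P.2 = l * b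

/-- A system of arrows on the complement `Eᶜ` of a staircase: each `p ∉ E` carries an
arrow `(p, f p)`, ends are pairwise distinct, and the system is compatible with
multiplication. -/
def IsCArrowSystem (a b : ℤ) (E : Set (ℕ × ℕ)) (f : ℕ × ℕ → ℕ × ℕ) : Prop :=
  (∀ p ∉ E, IsCArrow a b E p (f p)) ∧
  (∀ p ∉ E, ∀ q ∉ E, p ≠ q → f p ≠ f q) ∧
  (∀ p ∉ E, ∀ m : ℕ × ℕ, ∃ g ∉ E, f g = f p + m ∧ Shorter g (f p + m) p (f p))

/-- The box B_{M×N}. -/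
def Box (M N : ℕ) : Set (ℕ × ℕ) := {p | p.1 < M ∧ p.2 < N}

/-- The dual of a staircase `E ⊆ B_{M×N}` inside the box. -/
def dualStaircase (E : Set (ℕ × ℕ)) (M N : ℕ) : Set (ℕ × ℕ) :=
  {p ∈ Box M N | (M - 1 - p.1, N - 1 - p.2) ∉ E}

/-- `SEcount a b E m` = number of elements of `E` that are ≤ the monomial `m`. -/
noncomputable def SEcount (a b : ℤ) (E : Set (ℕ × ℕ)) (m : ℕ × ℕ) : ℕ :=
  {p ∈ E | mLe a b p m}.ncard

lemma mLe_trans (a b : ℤ) {p q r : ℕ × ℕ} (h1 : mLe a b p q) (h2 : mLe a b q r) :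
    mLe a b p r := by
  rcases h1 with h1 | rfl
  · rcases h2 with h2 | rfl
    · left
      rcases h1 with h1 | ⟨e1, y1⟩ <;> rcases h2 with h2 | ⟨e2, y2⟩
      · exact Or.inl (h1.trans h2)
      · exact Or.inl (e2 ▸ h1)
      · exact Or.inl (e1 ▸ h2)
      · exact Or.inr ⟨e1.trans e2, y1.trans y2⟩
    · exact Or.inl h1
  · exact h2

lemma arrow_deg_eq (a b : ℤ) {P Q : ℕ × ℕ} {l : ℤ}
    (h1 : (Q.1 : ℤ) - P.1 = l * a) (h2 : (Q.2 : ℤ) - P.2 = l * b) :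
    dDeg a b Q = dDeg a b P := by
  unfold dDeg
  have hq1 : (Q.1 : ℤ) = P.1 + l * a := by linarith
  have hq2 : (Q.2 : ℤ) = P.2 + l * b := by linarith
  rw [hq1, hq2]; ring

/-- Descent: if b > 0, every arrow system is the identity on E. -/
lemma descent (a b : ℤ) (ha : 0 < a) (hb : 0 < b) (E : Set (ℕ × ℕ)) (hE : IsStaircase E)
    (f : ℕ × ℕ → ℕ × ℕ) (harr : ∀ p ∈ E, IsArrow a b E p (f p))
    (hinj : ∀ p ∈ E, ∀ q ∈ E, p ≠ q → f p ≠ f q) :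
    ∀ p ∈ E, f p = p := by
  suffices H : ∀ n : ℕ, ∀ p : ℕ × ℕ, p ∈ E → p.2 = n → f p = p by
    intro p hp; exact H p.2 p hp rfl
  intro n
  induction n using Nat.strong_induction_on with
  | _ n ih =>
    intro p hp hpn
    obtain ⟨-, l, hl, h1, h2⟩ := harr p hp
    rcases lt_or_eq_of_le hl with hl0 | rfl
    · -- l < 0 : contradiction via descent
      exfalso
      have hla : 0 ≤ -l * a := mul_nonneg (by linarith) (le_of_lt ha)
      have hlb : 0 ≤ -l * b := mul_nonneg (by linarith) (le_of_lt hb)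
      have hadd : f p + ((-l * a).toNat, (-l * b).toNat) = p := by
        have e1 : ((-l * a).toNat : ℤ) = -l * a := Int.toNat_of_nonneg hla
        have e2 : ((-l * b).toNat : ℤ) = -l * b := Int.toNat_of_nonneg hlb
        have c1 : ((f p).1 : ℤ) + ((-l * a).toNat : ℤ) = p.1 := by rw [e1]; linarith
        have c2 : ((f p).2 : ℤ) + ((-l * b).toNat : ℤ) = p.2 := by rw [e2]; linarith
        have : ((f p).1 + (-l * a).toNat, (f p).2 + (-l * b).toNat) = p := by
          apply Prod.ext <;> simp <;> omega
        simpa [Prod.ext_iff] using this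
      have hq : f p ∈ E := by
        by_contra hq
        exact hE (f p) hq ((-l * a).toNat, (-l * b).toNat) (by rw [hadd]; exact hp)
      have hy : (f p).2 < p.2 := by
        have : l * b < 0 := mul_neg_of_neg_of_pos hl0 hb
        omega
      have hfq : f (f p) = f p := ih (f p).2 (by omega) (f p) hq rfl
      have hne : p ≠ f p := by
        intro h; rw [← h] at hy; omega
      exact hinj p hp (f p) hq hne hfq.symm
    · -- l = 0
      simp only [zero_mul] at h1 h2
      apply Prod.ext <;> omega

/-- Key: every arrow satisfies mLe p (f p). -/
lemma arrow_mLe (a b : ℤ) (ha : 0 < a) (hb : b ≠ 0) (E : Set (ℕ × ℕ)) (hE : IsStaircase E)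
    (f : ℕ × ℕ → ℕ × ℕ) (harr : ∀ p ∈ E, IsArrow a b E p (f p))
    (hinj : ∀ p ∈ E, ∀ q ∈ E, p ≠ q → f p ≠ f q) :
    ∀ p ∈ E, mLe a b p (f p) := by
  intro p hp
  rcases lt_or_gt_of_ne hb with hbneg | hbpos
  · obtain ⟨-, l, hl, h1, h2⟩ := harr p hp
    have hdeg : dDeg a b (f p) = dDeg a b p := arrow_deg_eq a b h1 h2
    have hlb : 0 ≤ l * b := by nlinarith
    rcases lt_or_eq_of_le hlb with hlb0 | hlb0
    · left; right
      exact ⟨hdeg.symm, by omega⟩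
    · have hl0 : l = 0 := by
        rcases mul_eq_zero.mp hlb0.symm with h | h
        · exact h
        · exact absurd h (ne_of_lt hbneg)
      subst hl0
      simp only [zero_mul] at h1 h2
      right
      apply Prod.ext <;> omega
  · rw [descent a b ha hbpos E hE f harr hinj p hp]
    exact Or.inr rfl

theorem SEcount_le (a b : ℤ) (E F : Set (ℕ × ℕ)) (hEfin : E.Finite)
    (f : ℕ × ℕ → ℕ × ℕ) (hle : ∀ p ∈ E, mLe a b p (f p)) (himg : f '' E = F)
    (m : ℕ × ℕ) : SEcount a b F m ≤ SEcount a b E m := by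
  unfold SEcount
  have hA : {q ∈ F | mLe a b q m} = f '' {p ∈ E | mLe a b (f p) m} := by
    ext q
    constructor
    · rintro ⟨hqF, hqm⟩
      rw [← himg] at hqF
      obtain ⟨p, hp, rfl⟩ := hqF
      exact ⟨p, ⟨hp, hqm⟩, rfl⟩
    · rintro ⟨p, ⟨hp, hpm⟩, rfl⟩
      exact ⟨himg ▸ Set.mem_image_of_mem f hp, hpm⟩
  rw [hA]
  have hsub1 : {p ∈ E | mLe a b (f p) m} ⊆ {p ∈ E | mLe a b p m} := by
    rintro p ⟨hp, hpm⟩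
    exact ⟨hp, mLe_trans a b (hle p hp) hpm⟩
  have hfin2 : {p ∈ E | mLe a b p m}.Finite := hEfin.subset (Set.sep_subset _ _)
  calc (f '' {p ∈ E | mLe a b (f p) m}).ncard
      ≤ {p ∈ E | mLe a b (f p) m}.ncard :=
        Set.ncard_image_le (hfin2.subset hsub1)
    _ ≤ {p ∈ E | mLe a b p m}.ncard := Set.ncard_le_ncard hsub1 hfin2

/-- if there is a system of arrows from E to F (staircases of the same
finite cardinality), then S_E ≥ S_F pointwise; moreover S(E) and E have the same
cardinality. Contrapositively, if S_E ≥ S_F fails somewhere then there is no system of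
arrows from E to F. -/
theorem stmt_15 (a b : ℤ) (ha : 0 < a) (hb : b ≠ 0) (hab : IsCoprime a b)
    (E F : Set (ℕ × ℕ)) (hE : IsStaircase E) (hF : IsStaircase F)
    (hEfin : E.Finite) (hFfin : F.Finite) (hcard : E.ncard = F.ncard)
    (f : ℕ × ℕ → ℕ × ℕ) (hf : IsArrowSystem a b E f) (himg : f '' E = F) :
    (∀ m : ℕ × ℕ, SEcount a b F m ≤ SEcount a b E m) ∧ (f '' E).ncard = E.ncard := by
  obtain ⟨harr, hinj, -⟩ := hf
  constructor
  · intro m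
    exact SEcount_le a b E F hEfin f
      (arrow_mLe a b ha hb E hE f harr hinj) himg m
  · apply Set.ncard_image_of_injOn
    intro p hp q hq h
    by_contra hne
    exact hinj p hp q hq hne h
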